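/- Consider items I = {a,b,c,d} and four agents: unit-demand agents 2, 3, 4 with v₂ = 2 on {a,b}, v₃ = 2 on {a,c}, v₄ = 1 on {d}, and agent 1 a coverage valuation with v₁({b}) = v₁({c}) = 2, v₁({a}) = v₁({d}) = 3, v₁({a,b}) = v₁({a,c}) = v₁({d,b}) = v₁({d,c}) = v₁({a,d}) = 3.5, v₁({a,b,d}) = v₁({a,c,d}) = 3.75, and v₁(S) = 4 whenever {b,c} ⊆ S. Then there is no item pricing p : I → ℝ≥0 under which every agent, arriving first, would uniquely (strictly) demand their bundle in the optimal allocation (a to agent 1, b to agent 2, c to agent 3, d to agent 4). Specifically, the conditions p(d) < 1, p(a) < p(d), p(b) < p(a), p(c) < p(a), and p(b) + p(c) − p(a) > 1 are jointly unsatisfiable. -/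

import Mathlib

/-- The coverage representation of agent 1's valuation: sets covered by the four items
`a, b, c, d` (encoded `0, 1, 2, 3`) among eight ground elements. -/
def cover5 : Fin 4 → Finset (Fin 8) := ![{0, 1, 4, 5}, {0, 1, 2, 3}, {4, 5, 6, 7}, {0, 3, 4, 7}]

/-- The weights of the eight ground elements. -/
noncomputable def wt5 : Fin 8 → ℝ := ![5/4, 1/4, 1/4, 1/4, 5/4, 1/4, 1/4, 1/4]

/-- Agent 1's coverage valuation: `v₁(S)` is the total weight of the elements covered by `S`.
It satisfies `v₁({b}) = v₁({c}) = 2`, `v₁({a}) = v₁({d}) = 3`, `v₁({a,b}) = ⋯ = 3.5`,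
`v₁({a,b,d}) = v₁({a,c,d}) = 3.75`, and `v₁(S) = 4` whenever `{b,c} ⊆ S`. -/
noncomputable def v₁ (S : Finset (Fin 4)) : ℝ := ∑ e ∈ S.biUnion cover5, wt5 e

/-- Agent 2: unit demand, value 2 for any set meeting `{a, b}`. -/
def v₂ (S : Finset (Fin 4)) : ℝ := if (0 : Fin 4) ∈ S ∨ (1 : Fin 4) ∈ S then 2 else 0

/-- Agent 3: unit demand, value 2 for any set meeting `{a, c}`. -/
def v₃ (S : Finset (Fin 4)) : ℝ := if (0 : Fin 4) ∈ S ∨ (2 : Fin 4) ∈ S then 2 else 0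

/-- Agent 4: unit demand, value 1 for any set containing `d`. -/
def v₄ (S : Finset (Fin 4)) : ℝ := if (3 : Fin 4) ∈ S then 1 else 0

/-- Utility of a bundle `S` at item prices `p`. -/
def util5 (v : Finset (Fin 4) → ℝ) (p : Fin 4 → ℝ) (S : Finset (Fin 4)) : ℝ :=
  v S - ∑ j ∈ S, p j

/-!
Each inequality comes from one deviation: agent 4 prefers `{d}` to `∅`, agent 1 prefers `{a}` to
`{d}` and to `{b, c}`, and agents 2 and 3 prefer `{b}`, resp. `{c}`, to `{a}`. The last one gives
`p(b) + p(c) > 1 + p(a)`, so `p(a) > 1` since `p(b), p(c) < p(a)`, contradicting `p(a) < p(d) < 1`.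
-/

def UniquelyDemands (v : Finset (Fin 4) → ℝ) (p : Fin 4 → ℝ) (T : Finset (Fin 4)) : Prop :=
  ∀ S : Finset (Fin 4), S ≠ T → util5 v p S < util5 v p T

section Utility

variable (v : Finset (Fin 4) → ℝ) (p : Fin 4 → ℝ)

@[simp]
theorem util5_empty : util5 v p ∅ = v ∅ := by
  simp [util5]

@[simp]
theorem util5_singleton (i : Fin 4) : util5 v p {i} = v {i} - p i := by
  simp [util5]

theorem util5_pair {i j : Fin 4} (hij : i ≠ j) : util5 v p {i, j} = v {i, j} - (p i + p j) := by
  simp [util5, Finset.sum_pair hij]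

end Utility

theorem v₁_singleton_a : v₁ {0} = 3 := by
  simp [v₁, cover5, wt5, Finset.sum_insert, Matrix.cons_val]
  norm_num

theorem v₁_singleton_d : v₁ {3} = 3 := by
  simp [v₁, cover5, wt5, Finset.sum_insert, Matrix.cons_val]
  norm_num

theorem v₁_pair_bc : v₁ {1, 2} = 4 := by
  have hcover : ({1, 2} : Finset (Fin 4)).biUnion cover5 = Finset.univ := by decide
  rw [v₁, hcover, Fin.sum_univ_eight]
  simp [wt5, Matrix.cons_val]
  norm_num

variable {p : Fin 4 → ℝ}

theorem price_d_lt_one (h : UniquelyDemands v₄ p {3}) : p 3 < 1 := by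
  simpa [v₄] using h ∅ (by decide)

theorem price_a_lt_price_d (h : UniquelyDemands v₁ p {0}) : p 0 < p 3 := by
  simpa [v₁_singleton_a, v₁_singleton_d] using h {3} (by decide)

theorem price_b_lt_price_a (h : UniquelyDemands v₂ p {1}) : p 1 < p 0 := by
  simpa [v₂] using h {0} (by decide)

theorem price_c_lt_price_a (h : UniquelyDemands v₃ p {2}) : p 2 < p 0 := by
  simpa [v₃] using h {0} (by decide)

theorem one_lt_price_b_add_price_c_sub_price_a (h : UniquelyDemands v₁ p {0}) :
    1 < p 1 + p 2 - p 0 := by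
  have h_bc := h {1, 2} (by decide)
  rw [util5_pair _ _ (by decide), util5_singleton, v₁_pair_bc, v₁_singleton_a] at h_bc
  linarith

theorem price_b_add_price_c_sub_price_a_le_one {pa pb pc pd : ℝ} (hd : pd < 1) (had : pa < pd)
    (hba : pb < pa) (hca : pc < pa) : pb + pc - pa ≤ 1 := by
  linarith

theorem stmt_5 :
    (¬ ∃ p : Fin 4 → ℝ, (∀ j, 0 ≤ p j) ∧
        (∀ S : Finset (Fin 4), S ≠ {0} → util5 v₁ p S < util5 v₁ p {0}) ∧
        (∀ S : Finset (Fin 4), S ≠ {1} → util5 v₂ p S < util5 v₂ p {1}) ∧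
        (∀ S : Finset (Fin 4), S ≠ {2} → util5 v₃ p S < util5 v₃ p {2}) ∧
        (∀ S : Finset (Fin 4), S ≠ {3} → util5 v₄ p S < util5 v₄ p {3})) ∧
    (¬ ∃ pa pb pc pd : ℝ, 0 ≤ pa ∧ 0 ≤ pb ∧ 0 ≤ pc ∧ 0 ≤ pd ∧
        pd < 1 ∧ pa < pd ∧ pb < pa ∧ pc < pa ∧ pb + pc - pa > 1) := by
  refine ⟨?_, ?_⟩
  · rintro ⟨p, -, h₁, h₂, h₃, h₄⟩
    exact (price_b_add_price_c_sub_price_a_le_one (price_d_lt_one h₄) (price_a_lt_price_d h₁)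
      (price_b_lt_price_a h₂) (price_c_lt_price_a h₃)).not_gt
      (one_lt_price_b_add_price_c_sub_price_a h₁)
  · rintro ⟨pa, pb, pc, pd, -, -, -, -, hd, had, hba, hca, h_sum⟩
    exact (price_b_add_price_c_sub_price_a_le_one hd had hba hca).not_gt h_sum
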